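/- arXiv:0807.0403 — 2 statements merged into one kernel-verified Lean document; each statement's English description precedes it below -/
import Mathlib

section
/- Under the CFL condition λ·max|f'| + μ·max|A'| ≤ 1/2 with λ = Δt/Δx and μ = Δt/Δx², the explicit scheme U_j^{n+1} = U_j^n - λ(h(U_{j+1}^n, U_j^n) - h(U_j^n, U_{j-1}^n)) + μ(A(U_{j+1}^n) - 2A(U_j^n) + A(U_{j-1}^n)) is monotone: U_j^{n+1} is a nondecreasing function of each of U_{j-1}^n, U_j^n, U_{j+1}^n, where h is the Engquist-Osher flux of f. -/
/-!
The Engquist–Osher flux `h v u` is nondecreasing in the left state `u` and nonincreasing in the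
right state `v`, since `|f v - f u| ≤ ∫ u..v |f'|`; with `A` nondecreasing this makes the update
monotone in the outer arguments for any `λ, μ ≥ 0`. In the central argument the increment of the
update from `b` to `b'` is `∫ b..b' (1 - λ|f'| - 2μA')`, and the CFL condition makes the integrand
nonnegative on `[0, 1]`.
-/

open Real Set intervalIntegral

noncomputable def engquistOsherFlux (f : ℝ → ℝ) (v u : ℝ) : ℝ :=
  (1 / 2) * (f u + f v - ∫ w in u..v, |deriv f w|)

noncomputable def engquistOsherStep (lam mu : ℝ) (f A : ℝ → ℝ) (a b c : ℝ) : ℝ :=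
  b - lam * (engquistOsherFlux f c b - engquistOsherFlux f b a) + mu * (A c - 2 * A b + A a)

section Flux

variable {f : ℝ → ℝ} (hf : ContDiff ℝ 1 f)
include hf

theorem intervalIntegrable_abs_deriv (u v : ℝ) :
    IntervalIntegrable (fun w => |deriv f w|) MeasureTheory.volume u v :=
  (hf.continuous_deriv le_rfl).abs.intervalIntegrable u v

theorem abs_sub_le_integral_abs_deriv {u v : ℝ} (huv : u ≤ v) :
    |f v - f u| ≤ ∫ w in u..v, |deriv f w| := by
  rw [← integral_deriv_eq_sub (fun x _ => (hf.differentiable one_ne_zero) x)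
    ((hf.continuous_deriv le_rfl).intervalIntegrable u v)]
  exact abs_integral_le_integral_abs huv

theorem engquistOsherFlux_sub_right (v u u' : ℝ) :
    engquistOsherFlux f v u' - engquistOsherFlux f v u
      = (1 / 2) * (f u' - f u + ∫ w in u..u', |deriv f w|) := by
  have := integral_add_adjacent_intervals (intervalIntegrable_abs_deriv hf u u')
    (intervalIntegrable_abs_deriv hf u' v)
  simp only [engquistOsherFlux]
  linarith

theorem engquistOsherFlux_sub_left (v v' u : ℝ) :
    engquistOsherFlux f v' u - engquistOsherFlux f v u
      = (1 / 2) * (f v' - f v - ∫ w in v..v', |deriv f w|) := by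
  have := integral_add_adjacent_intervals (intervalIntegrable_abs_deriv hf u v)
    (intervalIntegrable_abs_deriv hf v v')
  simp only [engquistOsherFlux]
  linarith

theorem engquistOsherFlux_monotone_right (v : ℝ) : Monotone (engquistOsherFlux f v) := by
  intro u u' huu'
  have := engquistOsherFlux_sub_right hf v u u'
  have := neg_abs_le (f u' - f u)
  have := abs_sub_le_integral_abs_deriv hf huu'
  linarith

theorem engquistOsherFlux_antitone_left (u : ℝ) : Antitone (engquistOsherFlux f · u) := by
  intro v v' hvv'
  have := engquistOsherFlux_sub_left hf v v' u
  have := le_abs_self (f v' - f v)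
  have := abs_sub_le_integral_abs_deriv hf hvv'
  linarith

end Flux

section Step

variable {lam mu : ℝ} {f A : ℝ → ℝ}

theorem engquistOsherStep_monotone_left (hf : ContDiff ℝ 1 f) (hA : Monotone A)
    (hlam : 0 ≤ lam) (hmu : 0 ≤ mu) (b c : ℝ) :
    Monotone (engquistOsherStep lam mu f A · b c) := by
  intro a a' haa'
  have := mul_le_mul_of_nonneg_left (engquistOsherFlux_monotone_right hf b haa') hlam
  have := mul_le_mul_of_nonneg_left (hA haa') hmu
  simp only [engquistOsherStep]
  linarith

theorem engquistOsherStep_monotone_right (hf : ContDiff ℝ 1 f) (hA : Monotone A)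
    (hlam : 0 ≤ lam) (hmu : 0 ≤ mu) (a b : ℝ) :
    Monotone (engquistOsherStep lam mu f A a b) := by
  intro c c' hcc'
  have := mul_le_mul_of_nonneg_left (engquistOsherFlux_antitone_left hf b hcc') hlam
  have := mul_le_mul_of_nonneg_left (hA hcc') hmu
  simp only [engquistOsherStep]
  linarith

theorem engquistOsherStep_le_of_forall_le_one (hf : ContDiff ℝ 1 f) (hA : ContDiff ℝ 1 A)
    {a b b' c : ℝ} (hbb' : b ≤ b')
    (hcfl : ∀ w ∈ Icc b b', lam * |deriv f w| + 2 * mu * deriv A w ≤ 1) :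
    engquistOsherStep lam mu f A a b c ≤ engquistOsherStep lam mu f A a b' c := by
  have hA' := hA.continuous_deriv le_rfl
  have hint : ∫ w in b..b', (lam * |deriv f w| + 2 * mu * deriv A w) ≤ ∫ w in b..b', (1 : ℝ) :=
    integral_mono_on hbb'
      (((intervalIntegrable_abs_deriv hf b b').const_mul lam).add
        ((hA'.intervalIntegrable b b').const_mul (2 * mu)))
      intervalIntegrable_const hcfl
  rw [integral_add ((intervalIntegrable_abs_deriv hf b b').const_mul lam)
      ((hA'.intervalIntegrable b b').const_mul (2 * mu)),
    integral_const_mul, integral_const_mul,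
    integral_deriv_eq_sub (fun x _ => (hA.differentiable one_ne_zero) x)
      (hA'.intervalIntegrable b b'), integral_one] at hint
  have hc := engquistOsherFlux_sub_right hf c b b'
  have ha := engquistOsherFlux_sub_left hf b b' a
  have hincr : engquistOsherStep lam mu f A a b' c - engquistOsherStep lam mu f A a b c
      = (b' - b) - lam * (∫ w in b..b', |deriv f w|) - 2 * mu * (A b' - A b) := by
    simp only [engquistOsherStep]
    linear_combination (-lam) * (hc - ha)
  linarith

end Step

theorem mul_abs_add_two_mul_le_one_of_iSup {s : Set ℝ} (hs : IsCompact s) {g k : ℝ → ℝ}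
    (hg : Continuous g) (hk : Continuous k) {lam mu : ℝ} (hlam : 0 ≤ lam) (hmu : 0 ≤ mu)
    (hcfl : lam * (⨆ u : s, |g u|) + mu * (⨆ u : s, |k u|) ≤ 1 / 2) {w : ℝ} (hw : w ∈ s) :
    lam * |g w| + 2 * mu * k w ≤ 1 := by
  have le_iSup_of_continuous {φ : ℝ → ℝ} (hφ : Continuous φ) : |φ w| ≤ ⨆ u : s, |φ u| := by
    have hbdd := hs.bddAbove_image hφ.abs.continuousOn
    rw [image_eq_range] at hbdd
    exact le_ciSup hbdd ⟨w, hw⟩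
  have hg_le := mul_le_mul_of_nonneg_left (le_iSup_of_continuous hg) hlam
  have hk_le := mul_le_mul_of_nonneg_left ((le_abs_self _).trans (le_iSup_of_continuous hk)) hmu
  have := mul_nonneg hlam (abs_nonneg (g w))
  linarith

theorem scheme_monotone_under_CFL (f A : ℝ → ℝ)
    (hf : ContDiff ℝ 1 f) (hA : ContDiff ℝ 1 A) (hA' : ∀ u, 0 ≤ deriv A u)
    (Δt Δx lam mu : ℝ) (hΔt : 0 < Δt) (hΔx : 0 < Δx)
    (hlam : lam = Δt / Δx) (hmu : mu = Δt / Δx ^ 2)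
    (hCFL : lam * (⨆ u : Set.Icc (0:ℝ) 1, |deriv f u|) +
            mu * (⨆ u : Set.Icc (0:ℝ) 1, |deriv A u|) ≤ 1/2)
    (h : ℝ → ℝ → ℝ)
    (hh : ∀ v u, h v u = (1/2) * (f u + f v - ∫ w in u..v, |deriv f w|))
    (G : ℝ → ℝ → ℝ → ℝ)
    (hG : ∀ a b c, G a b c = b - lam * (h c b - h b a) + mu * (A c - 2 * A b + A a)) :
    (∀ a a' b c, a ∈ Icc (0:ℝ) 1 → a' ∈ Icc (0:ℝ) 1 → b ∈ Icc (0:ℝ) 1 →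
        c ∈ Icc (0:ℝ) 1 → a ≤ a' → G a b c ≤ G a' b c) ∧
    (∀ a b b' c, a ∈ Icc (0:ℝ) 1 → b ∈ Icc (0:ℝ) 1 → b' ∈ Icc (0:ℝ) 1 →
        c ∈ Icc (0:ℝ) 1 → b ≤ b' → G a b c ≤ G a b' c) ∧
    (∀ a b c c', a ∈ Icc (0:ℝ) 1 → b ∈ Icc (0:ℝ) 1 → c ∈ Icc (0:ℝ) 1 →
        c' ∈ Icc (0:ℝ) 1 → c ≤ c' → G a b c ≤ G a b c') := by
  obtain rfl : h = engquistOsherFlux f := funext fun v => funext (hh v)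
  obtain rfl : G = engquistOsherStep lam mu f A := funext fun a => funext fun b => funext (hG a b)
  have hlam0 : 0 ≤ lam := hlam ▸ by positivity
  have hmu0 : 0 ≤ mu := hmu ▸ by positivity
  have hAmono : Monotone A := monotone_of_deriv_nonneg (hA.differentiable one_ne_zero) hA'
  refine ⟨fun a a' b c _ _ _ _ haa' =>
      engquistOsherStep_monotone_left hf hAmono hlam0 hmu0 b c haa',
    fun a b b' c _ hb hb' _ hbb' => engquistOsherStep_le_of_forall_le_one hf hA hbb' ?_,
    fun a b c c' _ _ _ _ hcc' => engquistOsherStep_monotone_right hf hAmono hlam0 hmu0 a b hcc'⟩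
  intro w hw
  exact mul_abs_add_two_mul_le_one_of_iSup isCompact_Icc (hf.continuous_deriv le_rfl)
    (hA.continuous_deriv le_rfl) hlam0 hmu0 hCFL ⟨hb.1.trans hw.1, hw.2.trans hb'.2⟩
end

section
/- A monotone, conservative explicit finite-volume scheme (viewed as a map on ℓ¹(ℤ) sequences taking values in [0,1]) that is consistent (preserves constants) is ℓ¹-contractive: for any two sequences U, V, the updated sequences satisfy Σ_j |G(U)_j - G(V)_j| ≤ Σ_j |U_j - V_j|. -/
/-!
Crandall–Tartar: an order-preserving map that preserves the sum of every nonnegative ℓ¹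
difference is an ℓ¹ contraction, since with `W = U ⊔ V` one has
`|T U - T V| ≤ (T W - T U) + (T W - T V)` pointwise, and the right-hand side sums to
`∑ (W - U) + ∑ (W - V) = ∑ |U - V|`. A monotone scheme in conservation form has both
properties: monotonicity of `g` makes the flux `H` nondecreasing and 1-Lipschitz in its first
argument and nonincreasing and 1-Lipschitz in its second, so flux differences of ℓ¹-close
states are summable and telescope away.
-/

open Set

theorem tsum_abs_sub_le_of_monotoneOn_of_hasSum_sub {ι : Type*} {S : Set (ι → ℝ)}
    {T : (ι → ℝ) → ι → ℝ} (hS : ∀ U ∈ S, ∀ V ∈ S, U ⊔ V ∈ S) (hmono : MonotoneOn T S)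
    (hsum_eq : ∀ U ∈ S, ∀ W ∈ S, U ≤ W → ∀ t, HasSum (W - U) t → HasSum (T W - T U) t)
    {U V : ι → ℝ} (hU : U ∈ S) (hV : V ∈ S) (hsum : Summable fun j => |U j - V j|) :
    ∑' j, |T U j - T V j| ≤ ∑' j, |U j - V j| := by
  set W := U ⊔ V
  have hW : W ∈ S := hS U hU V hV
  have hUW : U ≤ W := le_sup_left
  have hVW : V ≤ W := le_sup_right
  have hsplit : ∀ j, (W - U) j + (W - V) j = |U j - V j| := fun j => by
    have := max_sub_min_eq_abs (U j) (V j)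
    have := min_add_max (U j) (V j)
    simp only [W, Pi.sub_apply, Pi.sup_apply, abs_sub_comm (U j)]
    linarith
  have hWU : Summable (W - U) := hsum.of_nonneg_of_le (fun j => sub_nonneg.2 (hUW j))
    fun j => (le_add_of_nonneg_right (sub_nonneg.2 (hVW j))).trans_eq (hsplit j)
  have hWV : Summable (W - V) := hsum.of_nonneg_of_le (fun j => sub_nonneg.2 (hVW j))
    fun j => (le_add_of_nonneg_left (sub_nonneg.2 (hUW j))).trans_eq (hsplit j)
  have hTWU := hsum_eq U hU W hW hUW _ hWU.hasSum
  have hTWV := hsum_eq V hV W hW hVW _ hWV.hasSum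
  have hpt : ∀ j, |T U j - T V j| ≤ (T W - T U) j + (T W - T V) j := fun j => by
    have := hmono hU hW hUW j
    have := hmono hV hW hVW j
    rw [abs_sub_le_iff]
    constructor <;> simp only [Pi.sub_apply] <;> linarith
  have hTsum : Summable fun j => |T U j - T V j| :=
    (hTWU.add hTWV).summable.of_nonneg_of_le (fun j => abs_nonneg _) hpt
  calc ∑' j, |T U j - T V j| ≤ ∑' j, (W - U) j + ∑' j, (W - V) j :=
        hasSum_le hpt hTsum.hasSum (hTWU.add hTWV)
    _ = ∑' j, |U j - V j| := by
        rw [← (hWU.hasSum.add hWV.hasSum).tsum_eq]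
        exact tsum_congr hsplit

theorem HasSum.sub_telescope_int {f D : ℤ → ℝ} {t : ℝ} (hf : HasSum f t) (hD : Summable D) :
    HasSum (fun j => f j - (D j - D (j - 1))) t := by
  have hshift : HasSum (fun j => D (j - 1)) (∑' j, D j) :=
    (Equiv.subRight (1 : ℤ)).hasSum_iff.2 hD.hasSum
  simpa using hf.sub (hD.hasSum.sub hshift)

structure IsMonotoneConservativeScheme (s : Set ℝ) (g : ℝ → ℝ → ℝ → ℝ) (H : ℝ → ℝ → ℝ) :
    Prop where
  mono_left : ∀ a a' b c, a ∈ s → a' ∈ s → b ∈ s → c ∈ s → a ≤ a' → g a b c ≤ g a' b c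
  mono_mid : ∀ a b b' c, a ∈ s → b ∈ s → b' ∈ s → c ∈ s → b ≤ b' → g a b c ≤ g a b' c
  mono_right : ∀ a b c c', a ∈ s → b ∈ s → c ∈ s → c' ∈ s → c ≤ c' → g a b c ≤ g a b c'
  conservative : ∀ a b c, a ∈ s → b ∈ s → c ∈ s → g a b c = b - (H b c - H a b)

def schemeUpdate (g : ℝ → ℝ → ℝ → ℝ) (U : ℤ → ℝ) : ℤ → ℝ :=
  fun j => g (U (j - 1)) (U j) (U (j + 1))

namespace IsMonotoneConservativeScheme

variable {s : Set ℝ} {g : ℝ → ℝ → ℝ → ℝ} {H : ℝ → ℝ → ℝ}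

theorem flux_mono_left (hg : IsMonotoneConservativeScheme s g H) {a a' b : ℝ} (ha : a ∈ s)
    (ha' : a' ∈ s) (hb : b ∈ s) (h : a ≤ a') : H a b ≤ H a' b := by
  have := hg.mono_left a a' b b ha ha' hb hb h
  rw [hg.conservative _ _ _ ha hb hb, hg.conservative _ _ _ ha' hb hb] at this
  linarith

theorem flux_anti_right (hg : IsMonotoneConservativeScheme s g H) {b c c' : ℝ} (hb : b ∈ s)
    (hc : c ∈ s) (hc' : c' ∈ s) (h : c ≤ c') : H b c' ≤ H b c := by
  have := hg.mono_right b b c c' hb hb hc hc' h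
  rw [hg.conservative _ _ _ hb hb hc, hg.conservative _ _ _ hb hb hc'] at this
  linarith

theorem flux_sub_left_le (hg : IsMonotoneConservativeScheme s g H) {a a' b : ℝ} (ha : a ∈ s)
    (ha' : a' ∈ s) (hb : b ∈ s) (h : a ≤ a') : H a' b - H a b ≤ a' - a := by
  have := hg.mono_mid a a a' b ha ha ha' hb h
  rw [hg.conservative _ _ _ ha ha hb, hg.conservative _ _ _ ha ha' hb] at this
  linarith [hg.flux_anti_right ha ha ha' h]

theorem flux_sub_right_le (hg : IsMonotoneConservativeScheme s g H) {b c c' : ℝ} (hb : b ∈ s)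
    (hc : c ∈ s) (hc' : c' ∈ s) (h : c ≤ c') : H b c - H b c' ≤ c' - c := by
  have := hg.mono_mid b c c' c hb hc hc' hc h
  rw [hg.conservative _ _ _ hb hc hc, hg.conservative _ _ _ hb hc' hc] at this
  linarith [hg.flux_mono_left hc hc' hc h]

theorem abs_flux_sub_le (hg : IsMonotoneConservativeScheme s g H) {a a' c c' : ℝ} (ha : a ∈ s)
    (ha' : a' ∈ s) (hc : c ∈ s) (hc' : c' ∈ s) (h₁ : a ≤ a') (h₂ : c ≤ c') :
    |H a' c' - H a c| ≤ (a' - a) + (c' - c) := by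
  have := hg.flux_mono_left ha ha' hc' h₁
  have := hg.flux_sub_left_le ha ha' hc' h₁
  have := hg.flux_anti_right ha hc hc' h₂
  have := hg.flux_sub_right_le ha hc hc' h₂
  rw [abs_le]
  constructor <;> linarith

theorem schemeUpdate_mono (hg : IsMonotoneConservativeScheme s g H) {U W : ℤ → ℝ}
    (hU : ∀ j, U j ∈ s) (hW : ∀ j, W j ∈ s) (h : U ≤ W) :
    schemeUpdate g U ≤ schemeUpdate g W := fun j =>
  calc g (U (j - 1)) (U j) (U (j + 1))
      ≤ g (W (j - 1)) (U j) (U (j + 1)) := hg.mono_left _ _ _ _ (hU _) (hW _) (hU _) (hU _) (h _)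
    _ ≤ g (W (j - 1)) (W j) (U (j + 1)) := hg.mono_mid _ _ _ _ (hW _) (hU _) (hW _) (hU _) (h _)
    _ ≤ g (W (j - 1)) (W j) (W (j + 1)) := hg.mono_right _ _ _ _ (hW _) (hW _) (hU _) (hW _) (h _)

theorem schemeUpdate_sub_eq (hg : IsMonotoneConservativeScheme s g H) {U W : ℤ → ℝ}
    (hU : ∀ j, U j ∈ s) (hW : ∀ j, W j ∈ s) (j : ℤ) :
    schemeUpdate g W j - schemeUpdate g U j =
      (W j - U j) - ((H (W j) (W (j + 1)) - H (U j) (U (j + 1))) -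
        (H (W (j - 1)) (W (j - 1 + 1)) - H (U (j - 1)) (U (j - 1 + 1)))) := by
  simp only [schemeUpdate, sub_add_cancel]
  rw [hg.conservative _ _ _ (hW _) (hW _) (hW _), hg.conservative _ _ _ (hU _) (hU _) (hU _)]
  ring

theorem hasSum_schemeUpdate_sub (hg : IsMonotoneConservativeScheme s g H) {U W : ℤ → ℝ}
    (hU : ∀ j, U j ∈ s) (hW : ∀ j, W j ∈ s) (h : U ≤ W) {t : ℝ} (ht : HasSum (W - U) t) :
    HasSum (schemeUpdate g W - schemeUpdate g U) t := by
  set F : ℤ → ℝ := fun j => H (W j) (W (j + 1)) - H (U j) (U (j + 1))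
  have hF : Summable F := by
    have hshift : Summable fun j => (W - U) (j + 1) :=
      (Equiv.addRight (1 : ℤ)).summable_iff.2 ht.summable
    refine ((ht.summable.add hshift).of_nonneg_of_le (fun j => abs_nonneg _) fun j => ?_).of_abs
    exact hg.abs_flux_sub_le (hU _) (hW _) (hU _) (hW _) (h _) (h _)
  convert ht.sub_telescope_int hF using 1
  funext j
  exact hg.schemeUpdate_sub_eq hU hW j

end IsMonotoneConservativeScheme

theorem monotone_scheme_l1_contractive_general
    (g : ℝ → ℝ → ℝ → ℝ) (H : ℝ → ℝ → ℝ)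
    (hmono1 : ∀ a a' b c, a ∈ Icc (0:ℝ) 1 → a' ∈ Icc (0:ℝ) 1 → b ∈ Icc (0:ℝ) 1 →
        c ∈ Icc (0:ℝ) 1 → a ≤ a' → g a b c ≤ g a' b c)
    (hmono2 : ∀ a b b' c, a ∈ Icc (0:ℝ) 1 → b ∈ Icc (0:ℝ) 1 → b' ∈ Icc (0:ℝ) 1 →
        c ∈ Icc (0:ℝ) 1 → b ≤ b' → g a b c ≤ g a b' c)
    (hmono3 : ∀ a b c c', a ∈ Icc (0:ℝ) 1 → b ∈ Icc (0:ℝ) 1 → c ∈ Icc (0:ℝ) 1 →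
        c' ∈ Icc (0:ℝ) 1 → c ≤ c' → g a b c ≤ g a b c')
    (hconserv : ∀ a b c, a ∈ Icc (0:ℝ) 1 → b ∈ Icc (0:ℝ) 1 → c ∈ Icc (0:ℝ) 1 →
        g a b c = b - (H b c - H a b))
    (U V : ℤ → ℝ) (hU : ∀ j, U j ∈ Icc (0:ℝ) 1) (hV : ∀ j, V j ∈ Icc (0:ℝ) 1)
    (hsum : Summable fun j => |U j - V j|) :
    ∑' j : ℤ, |g (U (j-1)) (U j) (U (j+1)) - g (V (j-1)) (V j) (V (j+1))| ≤
      ∑' j : ℤ, |U j - V j| := by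
  have hg : IsMonotoneConservativeScheme (Icc 0 1) g H := ⟨hmono1, hmono2, hmono3, hconserv⟩
  exact tsum_abs_sub_le_of_monotoneOn_of_hasSum_sub (S := {U | ∀ j, U j ∈ Icc (0:ℝ) 1})
    (fun U hU V hV j => max_rec' _ (hU j) (hV j))
    (fun U hU W hW h => hg.schemeUpdate_mono hU hW h)
    (fun U hU W hW h _ ht => hg.hasSum_schemeUpdate_sub hU hW h ht) hU hV hsum

theorem monotone_scheme_l1_contractive
    (g : ℝ → ℝ → ℝ → ℝ) (H : ℝ → ℝ → ℝ)
    (hrange : ∀ a b c, a ∈ Icc (0:ℝ) 1 → b ∈ Icc (0:ℝ) 1 → c ∈ Icc (0:ℝ) 1 →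
        g a b c ∈ Icc (0:ℝ) 1)
    (hmono1 : ∀ a a' b c, a ∈ Icc (0:ℝ) 1 → a' ∈ Icc (0:ℝ) 1 → b ∈ Icc (0:ℝ) 1 →
        c ∈ Icc (0:ℝ) 1 → a ≤ a' → g a b c ≤ g a' b c)
    (hmono2 : ∀ a b b' c, a ∈ Icc (0:ℝ) 1 → b ∈ Icc (0:ℝ) 1 → b' ∈ Icc (0:ℝ) 1 →
        c ∈ Icc (0:ℝ) 1 → b ≤ b' → g a b c ≤ g a b' c)
    (hmono3 : ∀ a b c c', a ∈ Icc (0:ℝ) 1 → b ∈ Icc (0:ℝ) 1 → c ∈ Icc (0:ℝ) 1 →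
        c' ∈ Icc (0:ℝ) 1 → c ≤ c' → g a b c ≤ g a b c')
    (hcons : ∀ u ∈ Icc (0:ℝ) 1, g u u u = u)
    (hconserv : ∀ a b c, a ∈ Icc (0:ℝ) 1 → b ∈ Icc (0:ℝ) 1 → c ∈ Icc (0:ℝ) 1 →
        g a b c = b - (H b c - H a b))
    (U V : ℤ → ℝ) (hU : ∀ j, U j ∈ Icc (0:ℝ) 1) (hV : ∀ j, V j ∈ Icc (0:ℝ) 1)
    (hsum : Summable fun j => |U j - V j|) :
    ∑' j : ℤ, |g (U (j-1)) (U j) (U (j+1)) - g (V (j-1)) (V j) (V (j+1))| ≤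
      ∑' j : ℤ, |U j - V j| :=
  monotone_scheme_l1_contractive_general g H hmono1 hmono2 hmono3 hconserv U V hU hV hsum
end
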